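/- The non-commuting graph of a finite non-abelian Lie algebra L has domination number 1 if and only if there exists a non-central element x with |C_L(x)| = 2. -/

import Mathlib

/-! A vertex `x` dominating the non-commuting graph commutes with no vertex but itself, and it
forces the center to vanish: for central `z ≠ 0`, `x + z` would be a vertex other than `x`
commuting with `x`. Hence `C_L(x) = {0, x}`. Conversely `C_L(x) = {0, x}` leaves only the
central element `0` and `x` itself outside the neighbourhood of `x`. -/

/-- The center of a Lie ring, as a set. -/
def lieCenter (L : Type*) [LieRing L] : Set L := {z : L | ∀ y : L, ⁅z, y⁆ = 0}

/-- The centralizer of an element of a Lie ring, as a set. -/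
def lieCentralizer {L : Type*} [LieRing L] (x : L) : Set L := {y : L | ⁅x, y⁆ = 0}

section

variable {L : Type*} [LieRing L]

theorem zero_mem_lieCenter : (0 : L) ∈ lieCenter L := fun y => zero_lie y

theorem ne_zero_of_notMem_lieCenter {x : L} (hx : x ∉ lieCenter L) : x ≠ 0 := by
  rintro rfl
  exact hx zero_mem_lieCenter

theorem pair_subset_lieCentralizer (x : L) : {0, x} ⊆ lieCentralizer x := by
  rintro y (rfl | rfl)
  · exact lie_zero x
  · exact lie_self y

theorem lieCentralizer_ncard_eq_two_iff {x : L} (hx : x ≠ 0) :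
    (lieCentralizer x).ncard = 2 ↔ lieCentralizer x = {0, x} := by
  constructor
  · intro hcard
    refine (Set.eq_of_subset_of_ncard_le (pair_subset_lieCentralizer x) ?_
      (Set.finite_of_ncard_ne_zero (by omega))).symm
    rw [hcard, Set.ncard_pair hx.symm]
  · intro h
    rw [h, Set.ncard_pair hx.symm]

theorem add_notMem_lieCenter {x z : L} (hx : x ∉ lieCenter L) (hz : z ∈ lieCenter L) :
    x + z ∉ lieCenter L := by
  intro hxz
  apply hx
  intro y
  simpa only [add_lie, hz y, add_zero] using hxz y

theorem eq_zero_of_mem_lieCenter_of_dominating {x : L} (hx : x ∉ lieCenter L)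
    (hdom : ∀ y ∈ (lieCenter L)ᶜ, y ≠ x → ⁅x, y⁆ ≠ 0) {z : L} (hz : z ∈ lieCenter L) :
    z = 0 := by
  by_contra hz0
  refine hdom (x + z) (add_notMem_lieCenter hx hz) (by simpa using hz0) ?_
  rw [lie_add, lie_self, zero_add, ← lie_skew, hz x, neg_zero]

theorem dominating_iff_lieCentralizer_eq_pair {x : L} (hx : x ∉ lieCenter L) :
    (∀ y ∈ (lieCenter L)ᶜ, y ≠ x → ⁅x, y⁆ ≠ 0) ↔ lieCentralizer x = {0, x} := by
  constructor
  · intro hdom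
    refine Set.Subset.antisymm ?_ (pair_subset_lieCentralizer x)
    intro y hy
    by_cases hyc : y ∈ lieCenter L
    · exact Or.inl (eq_zero_of_mem_lieCenter_of_dominating hx hdom hyc)
    · by_contra hyx
      exact hdom y hyc (fun h => hyx (Or.inr h)) hy
  · intro h y hy hyx hxy
    have hy' : y ∈ ({0, x} : Set L) := h ▸ hxy
    rcases hy' with rfl | rfl
    · exact hy zero_mem_lieCenter
    · exact hyx rfl

end

theorem stmt_13_general (L : Type*) [LieRing L] :
    (∃ x ∈ (lieCenter L)ᶜ, ∀ y ∈ (lieCenter L)ᶜ, y ≠ x → ⁅x, y⁆ ≠ 0) ↔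
    (∃ x ∈ (lieCenter L)ᶜ, (lieCentralizer x).ncard = 2) := by
  refine exists_congr fun x => and_congr_right fun hx => ?_
  rw [dominating_iff_lieCentralizer_eq_pair hx,
    lieCentralizer_ncard_eq_two_iff (ne_zero_of_notMem_lieCenter hx)]

/-- The non-commuting graph of a finite non-abelian Lie algebra `L` has
domination number 1 (some vertex adjacent to all other vertices) if and only if
there is a non-central element `x` with `|C_L(x)| = 2`. -/
theorem stmt_13 (K L : Type*) [Field K] [Fintype K] [LieRing L] [LieAlgebra K L]
    [Fintype L] (hna : ∃ a b : L, ⁅a, b⁆ ≠ 0) :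
    (∃ x ∈ (lieCenter L)ᶜ, ∀ y ∈ (lieCenter L)ᶜ, y ≠ x → ⁅x, y⁆ ≠ 0) ↔
    (∃ x ∈ (lieCenter L)ᶜ, (lieCentralizer x).ncard = 2) :=
  stmt_13_general L
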